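/- Rouché's theorem for the disc: let D ⊂ ℂ be an open set containing a closed disc Δ̄ of center c and radius R > 0, and let f, g : D → ℂ be holomorphic. If |f(z) − g(z)| < |g(z)| for every z on the boundary circle |z − c| = R, then f has a zero in the open disc Δ if and only if g has a zero in Δ. -/

import Mathlib

/-!
If `g` had no zero in the closed disc, `φ = f / g` would be holomorphic there with `Re φ > 0` on
the circle, since `|φ - 1| < 1` there. The maximum modulus principle applied to `exp (-φ)` then
gives `Re φ > 0` on the whole disc, so `f` has no zero either. The condition `Re (f / g) > 0` is
symmetric in `f` and `g`, which gives the converse.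
-/

open Metric Bornology

namespace Complex

theorem re_div_pos_of_norm_sub_lt {a b : ℂ} (h : ‖a - b‖ < ‖b‖) : 0 < (a / b).re := by
  have hb : b ≠ 0 := norm_pos_iff.1 ((norm_nonneg _).trans_lt h)
  have hlt : ‖a / b - 1‖ < 1 := by
    rwa [div_sub_one hb, norm_div, div_lt_one (norm_pos_iff.2 hb)]
  calc 0 < 1 - ‖a / b - 1‖ := sub_pos.2 hlt
    _ ≤ 1 + (a / b - 1).re := by linarith [neg_le_of_abs_le (abs_re_le_norm (a / b - 1))]
    _ = (a / b).re := by simp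

variable {E F : Type*} [NormedAddCommGroup E] [NormedSpace ℂ E] [Nontrivial E]
  [FiniteDimensional ℂ E] [NormedAddCommGroup F] [NormedSpace ℂ F] {U : Set E}

theorem norm_lt_of_forall_mem_frontier_norm_lt {f : E → F} (hU : IsBounded U)
    (hd : DiffContOnCl ℂ f U) {C : ℝ} (hC : ∀ z ∈ frontier U, ‖f z‖ < C) {z : E}
    (hz : z ∈ closure U) : ‖f z‖ < C := by
  obtain ⟨w, hw, hmax⟩ := exists_mem_frontier_isMaxOn_norm hU (closure_nonempty_iff.1 ⟨z, hz⟩) hd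
  exact (hmax hz).out.trans_lt (hC w hw)

theorem re_pos_of_forall_mem_frontier_re_pos {φ : E → ℂ} (hU : IsBounded U)
    (hd : DiffContOnCl ℂ φ U) (hre : ∀ z ∈ frontier U, 0 < (φ z).re) {z : E}
    (hz : z ∈ closure U) : 0 < (φ z).re := by
  have norm_exp_neg_lt_one {w : ℂ} : ‖exp (-w)‖ < 1 ↔ 0 < w.re := by
    rw [norm_exp, neg_re, Real.exp_lt_one_iff, neg_lt_zero]
  have hexp : DiffContOnCl ℂ (fun w ↦ exp (-φ w)) U :=
    differentiable_exp.comp_diffContOnCl hd.neg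
  exact norm_exp_neg_lt_one.1 <| norm_lt_of_forall_mem_frontier_norm_lt hU hexp
    (fun w hw ↦ norm_exp_neg_lt_one.2 (hre w hw)) hz

theorem exists_zero_of_forall_mem_frontier_re_div_pos {f g : E → ℂ} (hU : IsBounded U)
    (hf : DiffContOnCl ℂ f U) (hg : DiffContOnCl ℂ g U)
    (hre : ∀ z ∈ frontier U, 0 < (f z / g z).re) (hf0 : ∃ z ∈ U, f z = 0) :
    ∃ z ∈ U, g z = 0 := by
  by_contra! hg0
  have hg0' : ∀ z ∈ closure U, g z ≠ 0 := by
    rw [closure_eq_self_union_frontier]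
    rintro z (hz | hz) hgz
    · exact hg0 z hz hgz
    · simpa [hgz] using hre z hz
  have hdiv : DiffContOnCl ℂ (fun z ↦ f z / g z) U := by
    simpa only [div_eq_mul_inv, smul_eq_mul, Pi.inv_apply] using hf.smul (hg.inv hg0')
  obtain ⟨z, hz, hfz⟩ := hf0
  simpa [hfz] using re_pos_of_forall_mem_frontier_re_pos hU hdiv hre (subset_closure hz)

theorem exists_zero_iff_of_forall_mem_frontier_re_div_pos {f g : E → ℂ} (hU : IsBounded U)
    (hf : DiffContOnCl ℂ f U) (hg : DiffContOnCl ℂ g U)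
    (hre : ∀ z ∈ frontier U, 0 < (f z / g z).re) :
    (∃ z ∈ U, f z = 0) ↔ ∃ z ∈ U, g z = 0 := by
  have hre' : ∀ z ∈ frontier U, 0 < (g z / f z).re := fun z hz ↦ by
    rw [← inv_div, inv_re]
    exact div_pos (hre z hz) (normSq_pos.2 fun h ↦ by simpa [h] using hre z hz)
  exact ⟨exists_zero_of_forall_mem_frontier_re_div_pos hU hf hg hre,
    exists_zero_of_forall_mem_frontier_re_div_pos hU hg hf hre'⟩

end Complex

theorem rouche_disc_general (D : Set ℂ) (c : ℂ) (R : ℝ)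
    (hsub : closedBall c R ⊆ D) (f g : ℂ → ℂ)
    (hf : DifferentiableOn ℂ f D) (hg : DifferentiableOn ℂ g D)
    (hbd : ∀ z ∈ sphere c R, ‖f z - g z‖ < ‖g z‖) :
    (∃ z ∈ ball c R, f z = 0) ↔ ∃ z ∈ ball c R, g z = 0 :=
  Complex.exists_zero_iff_of_forall_mem_frontier_re_div_pos isBounded_ball
    (hf.diffContOnCl_ball hsub) (hg.diffContOnCl_ball hsub)
    fun z hz ↦ Complex.re_div_pos_of_norm_sub_lt (hbd z (frontier_ball_subset_sphere hz))

/-- Rouché's theorem for the disc: if `|f − g| < |g|` on the boundary circle,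
then `f` has a zero in the open disc iff `g` does. -/
theorem rouche_disc (D : Set ℂ) (hD : IsOpen D) (c : ℂ) (R : ℝ) (hR : 0 < R)
    (hsub : closedBall c R ⊆ D) (f g : ℂ → ℂ)
    (hf : DifferentiableOn ℂ f D) (hg : DifferentiableOn ℂ g D)
    (hbd : ∀ z ∈ sphere c R, ‖f z - g z‖ < ‖g z‖) :
    (∃ z ∈ ball c R, f z = 0) ↔ ∃ z ∈ ball c R, g z = 0 :=
  rouche_disc_general D c R hsub f g hf hg hbd
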